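/- In A = ℂ[x]/(x²), the endomorphism of A ⊗ A given by Δ ∘ m (comultiply after multiply) equals the endomorphism given by (y ⊗ id) + (id ⊗ y), where y is multiplication by x: for all a, b ∈ A, Δ(ab) = (x·a)⊗b + a⊗(x·b). (This underlies Proposition kl3.14b, cases where the bottom circle differs from the top circle.) -/

import Mathlib

/-!
Both sides are bilinear in `(a, b)`, and `A` is spanned by `1` and `ε`, so it suffices to
compare them on the four pairs of basis vectors, where `ε² = 0` makes the check immediate.
-/

open TensorProduct DualNumber

namespace DualNumber

theorem linearMap_ext_one_eps {R M : Type*} [Semiring R] [AddCommMonoid M] [Module R M]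
    ⦃f g : R[ε] →ₗ[R] M⦄ (h1 : f 1 = g 1) (hε : f ε = g ε) : f = g :=
  TrivSqZeroExt.linearMap_ext
    (fun r => by rw [← mul_one r, ← smul_eq_mul, TrivSqZeroExt.inl_smul, TrivSqZeroExt.inl_one,
      map_smul, map_smul, h1])
    (fun r => by rw [inr_eq_smul_eps, map_smul, map_smul, hε])

variable {R M : Type*} [CommSemiring R] [AddCommMonoid M] [Module R M]

theorem bilinearMap_ext_one_eps ⦃f g : R[ε] →ₗ[R] R[ε] →ₗ[R] M⦄
    (h11 : f 1 1 = g 1 1) (h1ε : f 1 ε = g 1 ε) (hε1 : f ε 1 = g ε 1) (hεε : f ε ε = g ε ε) :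
    f = g :=
  linearMap_ext_one_eps (linearMap_ext_one_eps h11 h1ε) (linearMap_ext_one_eps hε1 hεε)

theorem map_mul_eq_eps_mul_tmul_add_tmul_eps_mul {Δ : R[ε] →ₗ[R] R[ε] ⊗[R] R[ε]}
    (h1 : Δ 1 = ε ⊗ₜ 1 + 1 ⊗ₜ ε) (hε : Δ ε = ε ⊗ₜ ε) (a b : R[ε]) :
    Δ (a * b) = (ε * a) ⊗ₜ[R] b + a ⊗ₜ[R] (ε * b) := by
  have hbilin : (LinearMap.mul R R[ε]).compr₂ Δ =
      (TensorProduct.mk R R[ε] R[ε]).compl₁₂ (LinearMap.mulLeft R ε) LinearMap.id +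
        (TensorProduct.mk R R[ε] R[ε]).compl₁₂ LinearMap.id (LinearMap.mulLeft R ε) := by
    apply bilinearMap_ext_one_eps <;> simp [h1, hε, eps_mul_eps]
  exact LinearMap.congr_fun₂ hbilin a b

end DualNumber

/-- In `A = ℂ[x]/(x²)`, the map `Δ ∘ m` equals `(y ⊗ id) + (id ⊗ y)` where `y` is
multiplication by `x`: for all `a, b ∈ A`, `Δ(ab) = (x·a)⊗b + a⊗(x·b)`. -/
theorem stmt_9
    (Δ : DualNumber ℂ →ₗ[ℂ] DualNumber ℂ ⊗[ℂ] DualNumber ℂ)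
    (hΔ1 : Δ 1 = (ε : DualNumber ℂ) ⊗ₜ[ℂ] 1 + 1 ⊗ₜ[ℂ] (ε : DualNumber ℂ))
    (hΔx : Δ (ε : DualNumber ℂ) = (ε : DualNumber ℂ) ⊗ₜ[ℂ] (ε : DualNumber ℂ)) :
    ∀ a b : DualNumber ℂ, Δ (a * b) = (ε * a) ⊗ₜ[ℂ] b + a ⊗ₜ[ℂ] (ε * b) :=
  map_mul_eq_eps_mul_tmul_add_tmul_eps_mul hΔ1 hΔx
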